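/- Let P_θ be a row-stochastic matrix over S, let V₀, B₁, Dᴬ, r_θ : S → ℝ and ε > 0, and suppose the entrywise inequality r_θ ⪰ (1 − γ·P_θ) *ᵥ V₀ + ε·B₁ − Dᴬ holds. Then 1 − γ·P_θ is invertible and the vector V_θ := (1 − γ·P_θ)⁻¹ *ᵥ r_θ satisfies the entrywise inequality V_θ ⪰ V₀ + (1 − γ·P_θ)⁻¹ *ᵥ (ε·B₁ − Dᴬ); consequently, for any d : S → ℝ with d(s) ≥ 0 for all s, ∑_s d(s)·V_θ(s) ≥ ∑_s d(s)·V₀(s) + ∑_s d(s)·((1 − γ·P_θ)⁻¹ *ᵥ (ε·B₁ − Dᴬ))(s). (Performance improvement guarantee with policy approximation error, in matrix form.) -/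

import Mathlib

/-!
Write `A = 1 - γ • P`. Since a row of `P` averages the entries of `x`, at a coordinate `i` where
`x` is minimal we have `(A *ᵥ x) i ≤ (1 - γ) * x i`; hence `A *ᵥ x ≥ 0` forces `x ≥ 0`, i.e. `A` is
order-reflecting on vectors. This makes `A` injective, hence invertible, and the claimed
inequality is obtained by applying `A` to both sides, where it reduces to the hypothesis.
-/

open Matrix

namespace Matrix

variable {n : Type*} [Fintype n] [DecidableEq n] {P : Matrix n n ℝ} {γ : ℝ}

theorem le_mulVec_apply_of_forall_le (hP : P ∈ rowStochastic ℝ n) {x : n → ℝ} {i : n}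
    (hi : ∀ j, x i ≤ x j) : x i ≤ (P *ᵥ x) i :=
  calc x i = ∑ j, P i j * x i := by rw [← Finset.sum_mul, sum_row_of_mem_rowStochastic hP, one_mul]
    _ ≤ ∑ j, P i j * x j :=
      Finset.sum_le_sum fun j _ => mul_le_mul_of_nonneg_left (hi j) (nonneg_of_mem_rowStochastic hP)
    _ = (P *ᵥ x) i := rfl

theorem nonneg_of_nonneg_one_sub_smul_mulVec (hP : P ∈ rowStochastic ℝ n) (hγ0 : 0 ≤ γ)
    (hγ1 : γ < 1) {x : n → ℝ} (hx : 0 ≤ (1 - γ • P) *ᵥ x) : 0 ≤ x := by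
  intro i
  obtain ⟨k, -, hk⟩ := Finset.exists_min_image Finset.univ x ⟨i, Finset.mem_univ i⟩
  have hmin : ∀ j, x k ≤ x j := fun j => hk j (Finset.mem_univ j)
  have hPk : x k ≤ (P *ᵥ x) k := le_mulVec_apply_of_forall_le hP hmin
  have hAk : 0 ≤ x k - γ * (P *ᵥ x) k := by
    simpa only [sub_mulVec, one_mulVec, smul_mulVec, Pi.sub_apply, Pi.smul_apply, Pi.zero_apply,
      smul_eq_mul] using hx k
  have hxk : 0 ≤ x k :=
    nonneg_of_mul_nonneg_right (by nlinarith [mul_le_mul_of_nonneg_left hPk hγ0] :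
      0 ≤ (1 - γ) * x k) (by linarith)
  exact hxk.trans (hmin i)

theorem le_of_one_sub_smul_mulVec_le (hP : P ∈ rowStochastic ℝ n) (hγ0 : 0 ≤ γ) (hγ1 : γ < 1)
    {x y : n → ℝ} (h : (1 - γ • P) *ᵥ x ≤ (1 - γ • P) *ᵥ y) : x ≤ y := by
  rw [← sub_nonneg] at h ⊢
  rw [← mulVec_sub] at h
  exact nonneg_of_nonneg_one_sub_smul_mulVec hP hγ0 hγ1 h

theorem isUnit_one_sub_smul_of_mem_rowStochastic (hP : P ∈ rowStochastic ℝ n) (hγ0 : 0 ≤ γ)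
    (hγ1 : γ < 1) : IsUnit (1 - γ • P) :=
  mulVec_injective_iff_isUnit.mp fun _ _ h =>
    le_antisymm (le_of_one_sub_smul_mulVec_le hP hγ0 hγ1 h.le)
      (le_of_one_sub_smul_mulVec_le hP hγ0 hγ1 h.ge)

end Matrix

theorem stmt10_general {S : Type*} [Fintype S] [DecidableEq S]
    (γ : ℝ) (hγ : γ ∈ Set.Ioo (0 : ℝ) 1)
    (Pθ : Matrix S S ℝ)
    (hPnn : ∀ s s', 0 ≤ Pθ s s') (hProw : ∀ s, ∑ s', Pθ s s' = 1)
    (V₀ B₁ DA rθ : S → ℝ) (ε : ℝ)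
    (hr : ∀ s, ((1 - γ • Pθ) *ᵥ V₀) s + ε * B₁ s - DA s ≤ rθ s) :
    IsUnit (1 - γ • Pθ) ∧
    (∀ s, V₀ s + ((1 - γ • Pθ)⁻¹ *ᵥ (ε • B₁ - DA)) s ≤
      ((1 - γ • Pθ)⁻¹ *ᵥ rθ) s) ∧
    ∀ d : S → ℝ, (∀ s, 0 ≤ d s) →
      ∑ s, d s * V₀ s + ∑ s, d s * ((1 - γ • Pθ)⁻¹ *ᵥ (ε • B₁ - DA)) s ≤
        ∑ s, d s * ((1 - γ • Pθ)⁻¹ *ᵥ rθ) s := by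
  have hP : Pθ ∈ rowStochastic ℝ S := mem_rowStochastic_iff_sum.mpr ⟨hPnn, hProw⟩
  set A := 1 - γ • Pθ
  have hA : IsUnit A := isUnit_one_sub_smul_of_mem_rowStochastic hP hγ.1.le hγ.2
  have hAA : ∀ v, A *ᵥ (A⁻¹ *ᵥ v) = v := fun v => by
    rw [mulVec_mulVec, mul_nonsing_inv A ((isUnit_iff_isUnit_det A).mp hA), one_mulVec]
  have hmain : V₀ + A⁻¹ *ᵥ (ε • B₁ - DA) ≤ A⁻¹ *ᵥ rθ := by
    refine le_of_one_sub_smul_mulVec_le hP hγ.1.le hγ.2 (?_ : A *ᵥ _ ≤ A *ᵥ _)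
    intro s
    simp only [mulVec_add, hAA, Pi.add_apply, Pi.sub_apply, Pi.smul_apply, smul_eq_mul]
    linarith [hr s]
  refine ⟨hA, hmain, fun d hd => ?_⟩
  change d ⬝ᵥ V₀ + d ⬝ᵥ _ ≤ d ⬝ᵥ _
  rw [← dotProduct_add]
  exact dotProduct_le_dotProduct_of_nonneg_left hmain hd

theorem stmt10 {S : Type*} [Fintype S] [Nonempty S] [DecidableEq S]
    (γ : ℝ) (hγ : γ ∈ Set.Ioo (0 : ℝ) 1)
    (Pθ : Matrix S S ℝ)
    (hPnn : ∀ s s', 0 ≤ Pθ s s') (hProw : ∀ s, ∑ s', Pθ s s' = 1)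
    (V₀ B₁ DA rθ : S → ℝ) (ε : ℝ) (hε : 0 < ε)
    (hr : ∀ s, ((1 - γ • Pθ) *ᵥ V₀) s + ε * B₁ s - DA s ≤ rθ s) :
    IsUnit (1 - γ • Pθ) ∧
    (∀ s, V₀ s + ((1 - γ • Pθ)⁻¹ *ᵥ (ε • B₁ - DA)) s ≤
      ((1 - γ • Pθ)⁻¹ *ᵥ rθ) s) ∧
    ∀ d : S → ℝ, (∀ s, 0 ≤ d s) →
      ∑ s, d s * V₀ s + ∑ s, d s * ((1 - γ • Pθ)⁻¹ *ᵥ (ε • B₁ - DA)) s ≤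
        ∑ s, d s * ((1 - γ • Pθ)⁻¹ *ᵥ rθ) s :=
  stmt10_general γ hγ Pθ hPnn hProw V₀ B₁ DA rθ ε hr
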